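/- Removing the outermost two modes of a nonnegative, compactly supported, monotone (non-increasing away from site 0) sequence of mass m supported on {−N,…,N} with N ≥ 3 and ρ_N + ρ_{-N} > 0, and redistributing their mass onto sites {−1,0,1} as ρ̃_{-1} = ρ_{-1} + ½ρ_{-N}, ρ̃_0 = ρ_0 + ½(ρ_{-N}+ρ_N), ρ̃_1 = ρ_1 + ½ρ_N, strictly decreases the in-phase energy H whenever additionally ρ_1 + ρ_{-1} > ρ_0. Consequently any energy minimizer of fixed mass is supported on at most 5 consecutive nodes. -/
import Mathlib

/-- In-phase Hamiltonian `H(ρ) = Σ_j (½ρ_j² − 2 ρ_j ρ_{j-1})`. -/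
noncomputable def Hrho (N : ℕ) (ρ : ℤ → ℝ) : ℝ :=
  ∑ j ∈ Finset.Icc (-(N : ℤ)) (N : ℤ), ((1 / 2) * ρ j ^ 2 - 2 * ρ j * ρ (j - 1))

/-- The rearrangement removing the outermost modes `±N` and redistributing their mass
onto the sites `{-1, 0, 1}`. -/
noncomputable def outerRearrange (N : ℕ) (ρ : ℤ → ℝ) : ℤ → ℝ := fun j =>
  if j = (N : ℤ) ∨ j = -(N : ℤ) then 0
  else ρ j + (if j = -1 then ρ (-(N : ℤ)) / 2 else 0)
    + (if j = 0 then (ρ (-(N : ℤ)) + ρ (N : ℤ)) / 2 else 0)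
    + (if j = 1 then ρ (N : ℤ) / 2 else 0)

private lemma IccIco (a b : ℤ) : Finset.Icc a b = Finset.Ico a (b + 1) := by
  ext x; simp only [Finset.mem_Icc, Finset.mem_Ico]; omega

private lemma ico_split (f : ℤ → ℝ) (lo mid hi : ℤ) (hlo : lo ≤ mid) (hhi : mid ≤ hi) :
    ∑ i ∈ Finset.Ico lo hi, f i
      = (∑ i ∈ Finset.Ico lo mid, f i) + ∑ i ∈ Finset.Ico mid hi, f i := by
  rw [← Finset.sum_union (Finset.Ico_disjoint_Ico_consecutive lo mid hi),
    Finset.Ico_union_Ico_eq_Ico hlo hhi]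

private lemma ico_single (f : ℤ → ℝ) (a : ℤ) : ∑ i ∈ Finset.Ico a (a + 1), f i = f a := by
  have h : Finset.Ico a (a + 1) = {a} := by
    ext x; simp only [Finset.mem_Ico, Finset.mem_singleton]; omega
  rw [h, Finset.sum_singleton]

private lemma ico_shift (f : ℤ → ℝ) (lo hi d : ℤ) :
    ∑ i ∈ Finset.Ico lo hi, f (i + d) = ∑ i ∈ Finset.Ico (lo + d) (hi + d), f i := by
  rw [← Finset.map_add_right_Ico lo hi d, Finset.sum_map]
  rfl

private lemma mono_neg (ρ : ℤ → ℝ) (h : ∀ j : ℤ, j ≤ 0 → ρ (j - 1) ≤ ρ j)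
    (i j : ℤ) (hij : i ≤ j) (hj : j ≤ 0) : ρ i ≤ ρ j := by
  have key : ∀ (k : ℕ) (l : ℤ), l ≤ 0 → ρ (l - k) ≤ ρ l := by
    intro k
    induction k with
    | zero => intro l _; simp
    | succ n ih =>
      intro l hl
      have h1 : ρ (l - (n + 1 : ℕ)) ≤ ρ (l - n) := by
        have e : (l - (n + 1 : ℕ) : ℤ) = (l - n) - 1 := by push_cast; ring
        rw [e]
        exact h (l - n) (by omega)
      exact h1.trans (ih l hl)
  have h2 := key (j - i).toNat j hj
  rwa [show (j - ((j - i).toNat : ℤ)) = i by omega] at h2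

private lemma mono_pos (ρ : ℤ → ℝ) (h : ∀ j : ℤ, 0 ≤ j → ρ (j + 1) ≤ ρ j)
    (i j : ℤ) (hij : i ≤ j) (hi : 0 ≤ i) : ρ j ≤ ρ i := by
  have key : ∀ (k : ℕ) (l : ℤ), 0 ≤ l → ρ (l + k) ≤ ρ l := by
    intro k
    induction k with
    | zero => intro l _; simp
    | succ n ih =>
      intro l hl
      have h1 : ρ (l + (n + 1 : ℕ)) ≤ ρ (l + n) := by
        have e : (l + (n + 1 : ℕ) : ℤ) = (l + n) + 1 := by push_cast; ring
        rw [e]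
        exact h (l + n) (by omega)
      exact h1.trans (ih l hl)
  have h2 := key (j - i).toNat i hi
  rwa [show (i + ((j - i).toNat : ℤ)) = j by omega] at h2

set_option maxHeartbeats 1000000 in
private lemma part_one (N : ℕ) (hN : 3 ≤ N) (ρ : ℤ → ℝ) (hpos : ∀ j, 0 ≤ ρ j)
    (hsupp : ∀ j : ℤ, j ∉ Finset.Icc (-(N : ℤ)) (N : ℤ) → ρ j = 0)
    (hmonp : ∀ j : ℤ, 0 ≤ j → ρ (j + 1) ≤ ρ j)
    (hmonn : ∀ j : ℤ, j ≤ 0 → ρ (j - 1) ≤ ρ j)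
    (hout : 0 < ρ (N : ℤ) + ρ (-(N : ℤ))) :
    Hrho N (outerRearrange N ρ) < Hrho N ρ := by
  have hN3 : (3 : ℤ) ≤ (N : ℤ) := by exact_mod_cast hN
  set τ : ℤ → ℝ := outerRearrange N ρ with hτ
  have eN : τ (N : ℤ) = 0 := by
    simp only [hτ, outerRearrange]
    norm_num
  have emN : τ (-(N : ℤ)) = 0 := by
    simp only [hτ, outerRearrange]
    norm_num
  have egen : ∀ j : ℤ, j ≠ (N : ℤ) → j ≠ -(N : ℤ) → j ≠ -1 → j ≠ 0 → j ≠ 1 → τ j = ρ j := by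
    intro j h1 h2 h3 h4 h5
    simp only [hτ, outerRearrange]
    rw [if_neg (not_or.mpr ⟨h1, h2⟩), if_neg h3, if_neg h4, if_neg h5]
    ring
  have em1 : τ (-1) = ρ (-1) + ρ (-(N : ℤ)) / 2 := by
    have c1 : ¬((-1 : ℤ) = (N : ℤ) ∨ (-1 : ℤ) = -(N : ℤ)) := by omega
    have c3 : ¬((-1 : ℤ) = 0) := by omega
    have c4 : ¬((-1 : ℤ) = 1) := by omega
    simp only [hτ, outerRearrange]
    rw [if_neg c1]
    norm_num
  have e0 : τ 0 = ρ 0 + (ρ (-(N : ℤ)) + ρ (N : ℤ)) / 2 := by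
    have c1 : ¬((0 : ℤ) = (N : ℤ) ∨ (0 : ℤ) = -(N : ℤ)) := by omega
    have c2 : ¬((0 : ℤ) = -1) := by omega
    have c4 : ¬((0 : ℤ) = 1) := by omega
    simp only [hτ, outerRearrange]
    rw [if_neg c1]
    norm_num
  have e1 : τ 1 = ρ 1 + ρ (N : ℤ) / 2 := by
    have c1 : ¬((1 : ℤ) = (N : ℤ) ∨ (1 : ℤ) = -(N : ℤ)) := by omega
    have c2 : ¬((1 : ℤ) = -1) := by omega
    have c3 : ¬((1 : ℤ) = 0) := by omega
    simp only [hτ, outerRearrange]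
    rw [if_neg c1]
    norm_num
  have e2 : τ 2 = ρ 2 := egen 2 (by omega) (by omega) (by omega) (by omega) (by omega)
  have em2 : τ (-2) = ρ (-2) := egen (-2) (by omega) (by omega) (by omega) (by omega) (by omega)
  have emN1 : τ (-(N : ℤ) + 1) = ρ (-(N : ℤ) + 1) :=
    egen _ (by omega) (by omega) (by omega) (by omega) (by omega)
  have eN1 : τ ((N : ℤ) - 1) = ρ ((N : ℤ) - 1) :=
    egen _ (by omega) (by omega) (by omega) (by omega) (by omega)
  have hmNm1 : ρ (-(N : ℤ) - 1) = 0 := by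
    apply hsupp; simp only [Finset.mem_Icc]; omega
  set F : ℤ → ℝ := fun j =>
    ((1 / 2) * τ j ^ 2 - 2 * τ j * τ (j - 1)) - ((1 / 2) * ρ j ^ 2 - 2 * ρ j * ρ (j - 1))
    with hF
  have hdiff : Hrho N τ - Hrho N ρ
      = ∑ j ∈ ({-(N : ℤ), -(N : ℤ) + 1, -1, 0, 1, 2, (N : ℤ)} : Finset ℤ), F j := by
    unfold Hrho
    rw [← Finset.sum_sub_distrib]
    refine (Finset.sum_subset ?_ ?_).symm
    · intro x hx
      simp only [Finset.mem_insert, Finset.mem_singleton] at hx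
      simp only [Finset.mem_Icc]
      omega
    · intro x hx hxT
      simp only [Finset.mem_Icc] at hx
      simp only [Finset.mem_insert, Finset.mem_singleton] at hxT
      push_neg at hxT
      rw [egen x (by omega) (by omega) (by omega) (by omega) (by omega),
        egen (x - 1) (by omega) (by omega) (by omega) (by omega) (by omega)]
      ring
  have hsum : ∑ j ∈ ({-(N : ℤ), -(N : ℤ) + 1, -1, 0, 1, 2, (N : ℤ)} : Finset ℤ), F j
      = F (-(N : ℤ)) + F (-(N : ℤ) + 1) + F (-1) + F 0 + F 1 + F 2 + F (N : ℤ) := by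
    rw [Finset.sum_insert (by simp only [Finset.mem_insert, Finset.mem_singleton]; omega),
      Finset.sum_insert (by simp only [Finset.mem_insert, Finset.mem_singleton]; omega),
      Finset.sum_insert (by simp only [Finset.mem_insert, Finset.mem_singleton]; omega),
      Finset.sum_insert (by simp only [Finset.mem_insert, Finset.mem_singleton]; omega),
      Finset.sum_insert (by simp only [Finset.mem_insert, Finset.mem_singleton]; omega),
      Finset.sum_insert (by simp only [Finset.mem_singleton]; omega),
      Finset.sum_singleton]
    ring
  have hvals : Hrho N τ - Hrho N ρ
      = F (-(N : ℤ)) + F (-(N : ℤ) + 1) + F (-1) + F 0 + F 1 + F 2 + F (N : ℤ) := by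
    rw [hdiff, hsum]
  have hFmN : F (-(N : ℤ)) = -((1 / 2) * ρ (-(N : ℤ)) ^ 2) := by
    simp only [hF]
    rw [emN, hmNm1]
    ring
  have hFmN1 : F (-(N : ℤ) + 1) = 2 * ρ (-(N : ℤ) + 1) * ρ (-(N : ℤ)) := by
    simp only [hF]
    rw [emN1, show (-(N : ℤ) + 1 - 1) = -(N : ℤ) by ring, emN]
    ring
  have hFm1 : F (-1) = (1 / 2) * (ρ (-1) + ρ (-(N : ℤ)) / 2) ^ 2 - (1 / 2) * ρ (-1) ^ 2
      - 2 * (ρ (-1) + ρ (-(N : ℤ)) / 2) * ρ (-2) + 2 * ρ (-1) * ρ (-2) := by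
    simp only [hF]
    rw [em1, show ((-1 : ℤ) - 1) = -2 by ring, em2]
    ring
  have hF0 : F 0 = (1 / 2) * (ρ 0 + (ρ (-(N : ℤ)) + ρ (N : ℤ)) / 2) ^ 2 - (1 / 2) * ρ 0 ^ 2
      - 2 * (ρ 0 + (ρ (-(N : ℤ)) + ρ (N : ℤ)) / 2) * (ρ (-1) + ρ (-(N : ℤ)) / 2)
      + 2 * ρ 0 * ρ (-1) := by
    simp only [hF]
    rw [e0, show ((0 : ℤ) - 1) = -1 by ring, em1]
    ring
  have hF1 : F 1 = (1 / 2) * (ρ 1 + ρ (N : ℤ) / 2) ^ 2 - (1 / 2) * ρ 1 ^ 2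
      - 2 * (ρ 1 + ρ (N : ℤ) / 2) * (ρ 0 + (ρ (-(N : ℤ)) + ρ (N : ℤ)) / 2)
      + 2 * ρ 1 * ρ 0 := by
    simp only [hF]
    rw [e1, show ((1 : ℤ) - 1) = 0 by ring, e0]
    ring
  have hF2 : F 2 = -2 * ρ 2 * (ρ 1 + ρ (N : ℤ) / 2) + 2 * ρ 2 * ρ 1 := by
    simp only [hF]
    rw [e2, show ((2 : ℤ) - 1) = 1 by ring, e1]
    ring
  have hFN : F (N : ℤ) = -((1 / 2) * ρ (N : ℤ) ^ 2) + 2 * ρ (N : ℤ) * ρ ((N : ℤ) - 1) := by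
    simp only [hF]
    rw [eN, eN1]
    ring
  have m1 : ρ (-(N : ℤ) + 1) ≤ ρ (-2) := mono_neg ρ hmonn _ _ (by omega) (by omega)
  have m2 : ρ (-2) ≤ ρ (-1) := mono_neg ρ hmonn _ _ (by omega) (by omega)
  have m3 : ρ (-1) ≤ ρ 0 := mono_neg ρ hmonn _ _ (by omega) (by omega)
  have p1 : ρ ((N : ℤ) - 1) ≤ ρ 2 := mono_pos ρ hmonp 2 _ (by omega) (by omega)
  have p2 : ρ 2 ≤ ρ 1 := mono_pos ρ hmonp 1 2 (by omega) (by omega)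
  have p3 : ρ 1 ≤ ρ 0 := mono_pos ρ hmonp 0 1 (by omega) (by omega)
  have nA : 0 ≤ ρ (-(N : ℤ)) := hpos _
  have nB : 0 ≤ ρ (N : ℤ) := hpos _
  have n1 : 0 ≤ ρ 1 := hpos _
  have nm1 : 0 ≤ ρ (-1) := hpos _
  have key : Hrho N τ - Hrho N ρ < 0 := by
    rw [hvals, hFmN, hFmN1, hFm1, hF0, hF1, hF2, hFN]
    have c1 : 0 ≤ ρ (-(N : ℤ)) * (ρ (-2) - ρ (-(N : ℤ) + 1)) :=
      mul_nonneg nA (by linarith only [m1])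
    have c2 : 0 ≤ ρ (-(N : ℤ)) * (ρ (-1) - ρ (-2)) := mul_nonneg nA (by linarith only [m2])
    have c3 : 0 ≤ ρ (-(N : ℤ)) * (ρ 0 - ρ (-1)) := mul_nonneg nA (by linarith only [m3])
    have c4 : 0 ≤ ρ (-(N : ℤ)) * ρ 1 := mul_nonneg nA n1
    have c5 : 0 ≤ ρ (N : ℤ) * (ρ 2 - ρ ((N : ℤ) - 1)) := mul_nonneg nB (by linarith only [p1])
    have c6 : 0 ≤ ρ (N : ℤ) * (ρ 1 - ρ 2) := mul_nonneg nB (by linarith only [p2])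
    have c7 : 0 ≤ ρ (N : ℤ) * (ρ 0 - ρ 1) := mul_nonneg nB (by linarith only [p3])
    have c8 : 0 ≤ ρ (N : ℤ) * ρ (-1) := mul_nonneg nB nm1
    have hABsq : 0 < (ρ (N : ℤ) + ρ (-(N : ℤ))) * (ρ (N : ℤ) + ρ (-(N : ℤ))) :=
      mul_pos hout hout
    have hdsq : 0 ≤ (ρ (N : ℤ) - ρ (-(N : ℤ))) * (ρ (N : ℤ) - ρ (-(N : ℤ))) :=
      mul_self_nonneg _
    have c9 : 0 < ρ (-(N : ℤ)) ^ 2 + ρ (-(N : ℤ)) * ρ (N : ℤ) + ρ (N : ℤ) ^ 2 := by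
      linarith only [hABsq, hdsq]
    linarith only [c1, c2, c3, c4, c5, c6, c7, c8, c9]
  linarith

private lemma gap_move (N : ℕ) (σ : ℤ → ℝ) (hpos : ∀ j, 0 ≤ σ j)
    (hsupp : ∀ j : ℤ, j ∉ Finset.Icc (-(N : ℤ)) (N : ℤ) → σ j = 0)
    (p r : ℤ) (hp : σ p ≠ 0) (hr : σ r ≠ 0) (hpr : p + 1 < r)
    (hzero : ∀ i : ℤ, p < i → i < r → σ i = 0) :
    ∃ σ' : ℤ → ℝ, (∀ j, 0 ≤ σ' j) ∧
      (∀ j : ℤ, j ∉ Finset.Icc (-(N : ℤ)) (N : ℤ) → σ' j = 0) ∧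
      (∑ j ∈ Finset.Icc (-(N : ℤ)) (N : ℤ), σ' j) = (∑ j ∈ Finset.Icc (-(N : ℤ)) (N : ℤ), σ j) ∧
      Hrho N σ' < Hrho N σ := by
  have hpI : p ∈ Finset.Icc (-(N : ℤ)) (N : ℤ) := by
    by_contra h; exact hp (hsupp p h)
  have hrI : r ∈ Finset.Icc (-(N : ℤ)) (N : ℤ)  := by
    by_contra h; exact hr (hsupp r h)
  simp only [Finset.mem_Icc] at hpI hrI
  set d : ℤ := r - p - 1 with hd
  have hd1 : 1 ≤ d := by omega
  set σ' : ℤ → ℝ := fun i => if i ≤ p then σ i else σ (i + d) with hσ'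
  have hup : ∀ i : ℤ, i ≤ p → σ' i = σ i := by
    intro i h; simp only [hσ', if_pos h]
  have hdown : ∀ i : ℤ, p < i → σ' i = σ (i + d) := by
    intro i h; simp only [hσ']; rw [if_neg (not_le.mpr h)]
  refine ⟨σ', ?_, ?_, ?_, ?_⟩
  · intro j
    by_cases h : j ≤ p
    · rw [hup j h]; exact hpos j
    · rw [hdown j (by omega)]; exact hpos _
  · intro j hj
    simp only [Finset.mem_Icc] at hj
    push_neg at hj
    by_cases h : j ≤ p
    · rw [hup j h]; apply hsupp; simp only [Finset.mem_Icc]; omega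
    · rw [hdown j (by omega)]; apply hsupp; simp only [Finset.mem_Icc]; omega
  · -- mass preserved
    rw [IccIco, ico_split σ' (-(N : ℤ)) (p + 1) ((N : ℤ) + 1) (by omega) (by omega),
      ico_split σ (-(N : ℤ)) (p + 1) ((N : ℤ) + 1) (by omega) (by omega)]
    have e1 : ∑ i ∈ Finset.Ico (-(N : ℤ)) (p + 1), σ' i
        = ∑ i ∈ Finset.Ico (-(N : ℤ)) (p + 1), σ i := by
      apply Finset.sum_congr rfl
      intro i hi
      simp only [Finset.mem_Ico] at hi
      exact hup i (by omega)
    rw [e1]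
    have e2 : ∑ i ∈ Finset.Ico (p + 1) ((N : ℤ) + 1), σ' i
        = ∑ i ∈ Finset.Ico (p + 1) ((N : ℤ) + 1), σ (i + d) := by
      apply Finset.sum_congr rfl
      intro i hi
      simp only [Finset.mem_Ico] at hi
      exact hdown i (by omega)
    rw [e2, ico_shift σ (p + 1) ((N : ℤ) + 1) d, show p + 1 + d = r by omega]
    rw [ico_split σ r ((N : ℤ) + 1) ((N : ℤ) + 1 + d) (by omega) (by omega)]
    have e3 : ∑ i ∈ Finset.Ico ((N : ℤ) + 1) ((N : ℤ) + 1 + d), σ i = 0 := by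
      apply Finset.sum_eq_zero
      intro i hi
      simp only [Finset.mem_Ico] at hi
      apply hsupp; simp only [Finset.mem_Icc]; omega
    rw [e3]
    have e4 : ∑ i ∈ Finset.Ico (p + 1) ((N : ℤ) + 1), σ i
        = ∑ i ∈ Finset.Ico r ((N : ℤ) + 1), σ i := by
      rw [ico_split σ (p + 1) r ((N : ℤ) + 1) (by omega) (by omega)]
      have : ∑ i ∈ Finset.Ico (p + 1) r, σ i = 0 := by
        apply Finset.sum_eq_zero
        intro i hi
        simp only [Finset.mem_Ico] at hi
        exact hzero i (by omega) (by omega)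
      rw [this]; ring
    rw [e4]; ring
  · -- energy strictly decreases
    have hσp : 0 < σ p := lt_of_le_of_ne (hpos p) (Ne.symm hp)
    have hσr : 0 < σ r := lt_of_le_of_ne (hpos r) (Ne.symm hr)
    set g : ℤ → ℝ := fun i => (1 / 2) * σ i ^ 2 - 2 * σ i * σ (i - 1) with hg
    set g' : ℤ → ℝ := fun i => (1 / 2) * σ' i ^ 2 - 2 * σ' i * σ' (i - 1) with hg'
    have hH' : Hrho N σ' = ∑ i ∈ Finset.Ico (-(N : ℤ)) ((N : ℤ) + 1), g' i := by
      unfold Hrho; rw [IccIco]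
    have hH : Hrho N σ = ∑ i ∈ Finset.Ico (-(N : ℤ)) ((N : ℤ) + 1), g i := by
      unfold Hrho; rw [IccIco]
    rw [hH', hH,
      ico_split g' (-(N : ℤ)) (p + 1) ((N : ℤ) + 1) (by omega) (by omega),
      ico_split g (-(N : ℤ)) (p + 1) ((N : ℤ) + 1) (by omega) (by omega)]
    have e1 : ∑ i ∈ Finset.Ico (-(N : ℤ)) (p + 1), g' i
        = ∑ i ∈ Finset.Ico (-(N : ℤ)) (p + 1), g i := by
      apply Finset.sum_congr rfl
      intro i hi
      simp only [Finset.mem_Ico] at hi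
      simp only [hg', hg]
      rw [hup i (by omega), hup (i - 1) (by omega)]
    rw [e1]
    have e2 : ∑ i ∈ Finset.Ico (p + 1) ((N : ℤ) + 1), g' i
        = g' (p + 1) + ∑ i ∈ Finset.Ico (p + 2) ((N : ℤ) + 1), g' i := by
      rw [ico_split g' (p + 1) (p + 2) ((N : ℤ) + 1) (by omega) (by omega),
        show p + 2 = (p + 1) + 1 by ring, ico_single g' (p + 1)]
    have e3 : g' (p + 1) = (1 / 2) * σ r ^ 2 - 2 * σ r * σ p := by
      simp only [hg']
      rw [hdown (p + 1) (by omega), hup (p + 1 - 1) (by omega),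
        show p + 1 + d = r by omega, show p + 1 - 1 = p by ring]
    have e4 : ∑ i ∈ Finset.Ico (p + 2) ((N : ℤ) + 1), g' i
        = ∑ i ∈ Finset.Ico (p + 2) ((N : ℤ) + 1), g (i + d) := by
      apply Finset.sum_congr rfl
      intro i hi
      simp only [Finset.mem_Ico] at hi
      simp only [hg', hg]
      rw [hdown i (by omega), hdown (i - 1) (by omega),
        show i - 1 + d = i + d - 1 by ring]
    have e5 : ∑ i ∈ Finset.Ico (p + 2) ((N : ℤ) + 1), g (i + d)
        = ∑ i ∈ Finset.Ico (r + 1) ((N : ℤ) + 1), g i := by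
      rw [ico_shift g (p + 2) ((N : ℤ) + 1) d, show p + 2 + d = r + 1 by omega]
      rw [ico_split g (r + 1) ((N : ℤ) + 1) ((N : ℤ) + 1 + d) (by omega) (by omega)]
      have : ∑ i ∈ Finset.Ico ((N : ℤ) + 1) ((N : ℤ) + 1 + d), g i = 0 := by
        apply Finset.sum_eq_zero
        intro i hi
        simp only [Finset.mem_Ico] at hi
        have h0 : σ i = 0 := by apply hsupp; simp only [Finset.mem_Icc]; omega
        simp only [hg]; rw [h0]; ring
      rw [this]; ring
    have e6 : ∑ i ∈ Finset.Ico (p + 1) ((N : ℤ) + 1), g i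
        = (1 / 2) * σ r ^ 2 + ∑ i ∈ Finset.Ico (r + 1) ((N : ℤ) + 1), g i := by
      rw [ico_split g (p + 1) r ((N : ℤ) + 1) (by omega) (by omega),
        ico_split g r (r + 1) ((N : ℤ) + 1) (by omega) (by omega), ico_single g r]
      have z1 : ∑ i ∈ Finset.Ico (p + 1) r, g i = 0 := by
        apply Finset.sum_eq_zero
        intro i hi
        simp only [Finset.mem_Ico] at hi
        have h0 : σ i = 0 := hzero i (by omega) (by omega)
        simp only [hg]; rw [h0]; ring
      have z2 : g r = (1 / 2) * σ r ^ 2 := by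
        simp only [hg]
        rw [hzero (r - 1) (by omega) (by omega)]; ring
      rw [z1, z2]; ring
    rw [e2, e3, e4, e5, e6]
    have := mul_pos hσr hσp
    linarith

private lemma nogap_move (N : ℕ) (σ : ℤ → ℝ) (hpos : ∀ j, 0 ≤ σ j)
    (hsupp : ∀ j : ℤ, j ∉ Finset.Icc (-(N : ℤ)) (N : ℤ) → σ j = 0)
    (a : ℤ) (ha : -(N : ℤ) ≤ a) (hb : a + 5 ≤ (N : ℤ))
    (hposall : ∀ i : ℤ, a ≤ i → i ≤ a + 5 → 0 < σ i) :
    ∃ σ' : ℤ → ℝ, (∀ j, 0 ≤ σ' j) ∧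
      (∀ j : ℤ, j ∉ Finset.Icc (-(N : ℤ)) (N : ℤ) → σ' j = 0) ∧
      (∑ j ∈ Finset.Icc (-(N : ℤ)) (N : ℤ), σ' j) = (∑ j ∈ Finset.Icc (-(N : ℤ)) (N : ℤ), σ j) ∧
      Hrho N σ' < Hrho N σ := by
  set L : ℝ := -2 * σ (a - 1) - σ a - 3 * σ (a + 1) + σ (a + 2) - σ (a + 3)
    + 3 * σ (a + 4) + σ (a + 5) + 2 * σ (a + 6) with hL
  set ε : ℝ := min (σ a) (min (σ (a + 1)) (min (σ (a + 2))
    (min (σ (a + 3)) (min (σ (a + 4)) (σ (a + 5)))))) with hε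
  have hε0 : 0 < ε := by
    apply lt_min (hposall a (by omega) (by omega))
    apply lt_min (hposall (a + 1) (by omega) (by omega))
    apply lt_min (hposall (a + 2) (by omega) (by omega))
    apply lt_min (hposall (a + 3) (by omega) (by omega))
    exact lt_min (hposall (a + 4) (by omega) (by omega)) (hposall (a + 5) (by omega) (by omega))
  have hεle : ε ≤ σ a ∧ ε ≤ σ (a + 1) ∧ ε ≤ σ (a + 2) ∧ ε ≤ σ (a + 3) ∧ ε ≤ σ (a + 4)
      ∧ ε ≤ σ (a + 5) := by
    refine ⟨min_le_left _ _, ?_, ?_, ?_, ?_, ?_⟩ <;>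
      [exact le_trans (min_le_right _ _) (min_le_left _ _);
       exact le_trans (min_le_right _ _) (le_trans (min_le_right _ _) (min_le_left _ _));
       exact le_trans (min_le_right _ _) (le_trans (min_le_right _ _)
         (le_trans (min_le_right _ _) (min_le_left _ _)));
       exact le_trans (min_le_right _ _) (le_trans (min_le_right _ _)
         (le_trans (min_le_right _ _) (le_trans (min_le_right _ _) (min_le_left _ _))));
       exact le_trans (min_le_right _ _) (le_trans (min_le_right _ _)
         (le_trans (min_le_right _ _) (le_trans (min_le_right _ _) (min_le_right _ _))))]
  set t : ℝ := if L ≤ 0 then ε else -ε with ht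
  have ht1 : -ε ≤ t ∧ t ≤ ε := by
    rw [ht]; split_ifs <;> constructor <;> linarith
  have htL : t * L ≤ 0 := by
    rw [ht]; split_ifs with h
    · exact mul_nonpos_of_nonneg_of_nonpos (le_of_lt hε0) h
    · push_neg at h
      have := mul_pos hε0 h
      nlinarith
  have ht2 : t ^ 2 = ε ^ 2 := by
    rw [ht]; split_ifs <;> ring
  set u : ℤ → ℝ := fun i =>
    if a ≤ i ∧ i ≤ a + 2 then t else if a + 3 ≤ i ∧ i ≤ a + 5 then -t else 0 with hu
  have hut : ∀ i : ℤ, a ≤ i → i ≤ a + 2 → u i = t := by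
    intro i h1 h2; simp only [hu]; rw [if_pos ⟨h1, h2⟩]
  have hunt : ∀ i : ℤ, a + 3 ≤ i → i ≤ a + 5 → u i = -t := by
    intro i h1 h2; simp only [hu]; rw [if_neg (by omega), if_pos ⟨h1, h2⟩]
  have hu0 : ∀ i : ℤ, i < a ∨ a + 5 < i → u i = 0 := by
    intro i h; simp only [hu]; rw [if_neg (by omega), if_neg (by omega)]
  set σ' : ℤ → ℝ := fun i => σ i + u i with hσ'
  refine ⟨σ', ?_, ?_, ?_, ?_⟩
  · intro j
    simp only [hσ']
    by_cases h1 : a ≤ j ∧ j ≤ a + 2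
    · rw [hut j h1.1 h1.2]
      have : ε ≤ σ j := by
        rcases (by omega : j = a ∨ j = a + 1 ∨ j = a + 2) with h | h | h <;> rw [h]
        · exact hεle.1
        · exact hεle.2.1
        · exact hεle.2.2.1
      linarith [ht1.1]
    · by_cases h2 : a + 3 ≤ j ∧ j ≤ a + 5
      · rw [hunt j h2.1 h2.2]
        have : ε ≤ σ j := by
          rcases (by omega : j = a + 3 ∨ j = a + 4 ∨ j = a + 5) with h | h | h <;> rw [h]
          · exact hεle.2.2.2.1
          · exact hεle.2.2.2.2.1
          · exact hεle.2.2.2.2.2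
        linarith [ht1.2]
      · rw [hu0 j (by omega)]
        have := hpos j; linarith
  · intro j hj
    have hj' := hj
    simp only [Finset.mem_Icc] at hj'
    push_neg at hj'
    simp only [hσ']
    rw [hsupp j hj, hu0 j (by omega)]; ring
  · -- mass
    have hadd : ∑ j ∈ Finset.Icc (-(N : ℤ)) (N : ℤ), σ' j
        = (∑ j ∈ Finset.Icc (-(N : ℤ)) (N : ℤ), σ j)
          + ∑ j ∈ Finset.Icc (-(N : ℤ)) (N : ℤ), u j := by
      rw [← Finset.sum_add_distrib]
    rw [hadd]
    have husum : ∑ j ∈ Finset.Icc (-(N : ℤ)) (N : ℤ), u j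
        = ∑ j ∈ Finset.Icc a (a + 5), u j := by
      refine (Finset.sum_subset ?_ ?_).symm
      · intro x hx
        simp only [Finset.mem_Icc] at hx ⊢; omega
      · intro x hx hxT
        simp only [Finset.mem_Icc] at hx hxT
        exact hu0 x (by omega)
    have hIcc6 : Finset.Icc a (a + 5) = {a, a + 1, a + 2, a + 3, a + 4, a + 5} := by
      ext x
      simp only [Finset.mem_Icc, Finset.mem_insert, Finset.mem_singleton]
      omega
    have hval : ∑ j ∈ Finset.Icc a (a + 5), u j = 0 := by
      rw [hIcc6,
        Finset.sum_insert (by simp only [Finset.mem_insert, Finset.mem_singleton]; omega),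
        Finset.sum_insert (by simp only [Finset.mem_insert, Finset.mem_singleton]; omega),
        Finset.sum_insert (by simp only [Finset.mem_insert, Finset.mem_singleton]; omega),
        Finset.sum_insert (by simp only [Finset.mem_insert, Finset.mem_singleton]; omega),
        Finset.sum_insert (by simp only [Finset.mem_singleton]; omega),
        Finset.sum_singleton]
      rw [hut a (by omega) (by omega), hut (a + 1) (by omega) (by omega),
        hut (a + 2) (by omega) (by omega), hunt (a + 3) (by omega) (by omega),
        hunt (a + 4) (by omega) (by omega), hunt (a + 5) (by omega) (by omega)]
      ring
    rw [husum, hval]; ring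
  · -- energy
    set D : ℤ → ℝ := fun i =>
      ((1 / 2) * σ' i ^ 2 - 2 * σ' i * σ' (i - 1)) - ((1 / 2) * σ i ^ 2 - 2 * σ i * σ (i - 1))
      with hD
    have hDoff : ∀ i : ℤ, i < a ∨ a + 6 < i → D i = 0 := by
      intro i h
      simp only [hD, hσ']
      rw [hu0 i (by omega), hu0 (i - 1) (by omega)]
      ring
    have hHext : ∀ τ : ℤ → ℝ, τ ((N : ℤ) + 1) = 0 →
        Hrho N τ = ∑ i ∈ Finset.Ico (-(N : ℤ)) ((N : ℤ) + 2),
          ((1 / 2) * τ i ^ 2 - 2 * τ i * τ (i - 1)) := by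
      intro τ hτ
      unfold Hrho
      rw [IccIco,
        ico_split (fun i => (1 / 2) * τ i ^ 2 - 2 * τ i * τ (i - 1)) (-(N : ℤ)) ((N : ℤ) + 1)
          ((N : ℤ) + 2) (by omega) (by omega),
        show ((N : ℤ) + 2) = ((N : ℤ) + 1) + 1 by ring,
        ico_single (fun i => (1 / 2) * τ i ^ 2 - 2 * τ i * τ (i - 1)) ((N : ℤ) + 1)]
      rw [hτ]; ring
    have hσN1 : σ ((N : ℤ) + 1) = 0 := by
      apply hsupp; simp only [Finset.mem_Icc]; omega
    have hσ'N1 : σ' ((N : ℤ) + 1) = 0 := by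
      simp only [hσ']
      rw [hσN1, hu0 ((N : ℤ) + 1) (by omega)]; ring
    have hdiff : Hrho N σ' - Hrho N σ = ∑ i ∈ Finset.Icc a (a + 6), D i := by
      rw [hHext σ' hσ'N1, hHext σ hσN1, ← Finset.sum_sub_distrib]
      refine (Finset.sum_subset ?_ ?_).symm
      · intro x hx
        simp only [Finset.mem_Icc] at hx
        simp only [Finset.mem_Ico]
        omega
      · intro x hx hxT
        simp only [Finset.mem_Ico] at hx
        simp only [Finset.mem_Icc] at hxT
        exact hDoff x (by omega)
    have hIcc7 : Finset.Icc a (a + 6) = {a, a + 1, a + 2, a + 3, a + 4, a + 5, a + 6} := by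
      ext x
      simp only [Finset.mem_Icc, Finset.mem_insert, Finset.mem_singleton]
      omega
    have hexp : ∑ i ∈ Finset.Icc a (a + 6), D i
        = D a + D (a + 1) + D (a + 2) + D (a + 3) + D (a + 4) + D (a + 5) + D (a + 6) := by
      rw [hIcc7,
        Finset.sum_insert (by simp only [Finset.mem_insert, Finset.mem_singleton]; omega),
        Finset.sum_insert (by simp only [Finset.mem_insert, Finset.mem_singleton]; omega),
        Finset.sum_insert (by simp only [Finset.mem_insert, Finset.mem_singleton]; omega),
        Finset.sum_insert (by simp only [Finset.mem_insert, Finset.mem_singleton]; omega),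
        Finset.sum_insert (by simp only [Finset.mem_insert, Finset.mem_singleton]; omega),
        Finset.sum_insert (by simp only [Finset.mem_singleton]; omega),
        Finset.sum_singleton]
      ring
    have hkey : Hrho N σ' - Hrho N σ = t * L - 3 * t ^ 2 := by
      rw [hdiff, hexp]
      simp only [hD, hσ']
      rw [hu0 (a - 1) (by omega), hu0 (a + 6) (by omega),
        show a + 1 - 1 = a by ring, show a + 2 - 1 = a + 1 by ring,
        show a + 3 - 1 = a + 2 by ring, show a + 4 - 1 = a + 3 by ring,
        show a + 5 - 1 = a + 4 by ring, show a + 6 - 1 = a + 5 by ring,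
        hut a (by omega) (by omega), hut (a + 1) (by omega) (by omega),
        hut (a + 2) (by omega) (by omega), hunt (a + 3) (by omega) (by omega),
        hunt (a + 4) (by omega) (by omega), hunt (a + 5) (by omega) (by omega), hL]
      ring
    have : Hrho N σ' - Hrho N σ < 0 := by
      rw [hkey, ht2]
      have h2 : 0 < ε * ε := mul_pos hε0 hε0
      nlinarith
    linarith

/-- Removing the outermost modes of a nonnegative monotone configuration strictly
decreases the energy; consequently any fixed-mass minimizer is supported on at most
five consecutive nodes. -/
theorem minimizer_support_five (N : ℕ) (hN : 3 ≤ N) (m : ℝ) (hm : 0 < m) :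
    (∀ ρ : ℤ → ℝ, (∀ j, 0 ≤ ρ j) →
      (∀ j : ℤ, j ∉ Finset.Icc (-(N : ℤ)) (N : ℤ) → ρ j = 0) →
      (∀ j : ℤ, 0 ≤ j → ρ (j + 1) ≤ ρ j) →
      (∀ j : ℤ, j ≤ 0 → ρ (j - 1) ≤ ρ j) →
      0 < ρ (N : ℤ) + ρ (-(N : ℤ)) →
      ρ 0 < ρ 1 + ρ (-1) →
      Hrho N (outerRearrange N ρ) < Hrho N ρ) ∧
    (∀ σ : ℤ → ℝ, (∀ j, 0 ≤ σ j) →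
      (∀ j : ℤ, j ∉ Finset.Icc (-(N : ℤ)) (N : ℤ) → σ j = 0) →
      (∑ j ∈ Finset.Icc (-(N : ℤ)) (N : ℤ), σ j) = m →
      (∀ σ' : ℤ → ℝ, (∀ j, 0 ≤ σ' j) →
        (∀ j : ℤ, j ∉ Finset.Icc (-(N : ℤ)) (N : ℤ) → σ' j = 0) →
        (∑ j ∈ Finset.Icc (-(N : ℤ)) (N : ℤ), σ' j) = m →
        Hrho N σ ≤ Hrho N σ') →
      ∃ k : ℤ, ∀ j : ℤ, σ j ≠ 0 → k ≤ j ∧ j ≤ k + 4) := by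
  constructor
  · intro ρ h1 h2 h3 h4 h5 _
    exact part_one N hN ρ h1 h2 h3 h4 h5
  · intro σ hpos hsupp hmass hmin
    classical
    set S : Finset ℤ := (Finset.Icc (-(N : ℤ)) (N : ℤ)).filter (fun i => σ i ≠ 0) with hS
    have hmem : ∀ j : ℤ, σ j ≠ 0 → j ∈ S := by
      intro j hj
      simp only [hS, Finset.mem_filter]
      refine ⟨?_, hj⟩
      by_contra h
      exact hj (hsupp j h)
    have hSne : S.Nonempty := by
      by_contra h
      rw [Finset.not_nonempty_iff_eq_empty] at h
      have : ∑ j ∈ Finset.Icc (-(N : ℤ)) (N : ℤ), σ j = 0 := by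
        apply Finset.sum_eq_zero
        intro i hi
        by_contra hne
        have := hmem i hne
        rw [h] at this
        exact absurd this (Finset.notMem_empty i)
      rw [hmass] at this
      linarith
    set a : ℤ := S.min' hSne with ha
    set b : ℤ := S.max' hSne with hb
    have haS : a ∈ S := S.min'_mem hSne
    have hbS : b ∈ S := S.max'_mem hSne
    have haI : -(N : ℤ) ≤ a ∧ a ≤ (N : ℤ) := by
      have := haS; simp only [hS, Finset.mem_filter, Finset.mem_Icc] at this; exact this.1
    have hbI : -(N : ℤ) ≤ b ∧ b ≤ (N : ℤ) := by
      have := hbS; simp only [hS, Finset.mem_filter, Finset.mem_Icc] at this; exact this.1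
    have haσ : σ a ≠ 0 := by
      have := haS; simp only [hS, Finset.mem_filter] at this; exact this.2
    have hbσ : σ b ≠ 0 := by
      have := hbS; simp only [hS, Finset.mem_filter] at this; exact this.2
    by_cases hlen : b ≤ a + 4
    · refine ⟨a, fun j hj => ⟨S.min'_le j (hmem j hj), ?_⟩⟩
      have := S.le_max' j (hmem j hj)
      omega
    · exfalso
      push_neg at hlen
      have hmove : ∃ σ' : ℤ → ℝ, (∀ j, 0 ≤ σ' j) ∧
          (∀ j : ℤ, j ∉ Finset.Icc (-(N : ℤ)) (N : ℤ) → σ' j = 0) ∧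
          (∑ j ∈ Finset.Icc (-(N : ℤ)) (N : ℤ), σ' j)
            = (∑ j ∈ Finset.Icc (-(N : ℤ)) (N : ℤ), σ j) ∧
          Hrho N σ' < Hrho N σ := by
        by_cases hgap : ∃ z : ℤ, a < z ∧ z < b ∧ σ z = 0
        · obtain ⟨z, hz1, hz2, hz3⟩ := hgap
          set P : Finset ℤ := S.filter (fun i => i < z) with hP
          have hPne : P.Nonempty := ⟨a, by simp only [hP, Finset.mem_filter]; exact ⟨haS, hz1⟩⟩
          set p : ℤ := P.max' hPne with hp
          have hpP : p ∈ P := P.max'_mem hPne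
          have hpS : p ∈ S := (Finset.mem_filter.mp hpP).1
          have hpz : p < z := (Finset.mem_filter.mp hpP).2
          have hpσ : σ p ≠ 0 := (Finset.mem_filter.mp ((hS ▸ hpS : p ∈ _))).2
          set R : Finset ℤ := S.filter (fun i => z < i) with hR
          have hRne : R.Nonempty := ⟨b, by simp only [hR, Finset.mem_filter]; exact ⟨hbS, hz2⟩⟩
          set r : ℤ := R.min' hRne with hr
          have hrR : r ∈ R := R.min'_mem hRne
          have hrS : r ∈ S := (Finset.mem_filter.mp hrR).1
          have hzr : z < r := (Finset.mem_filter.mp hrR).2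
          have hrσ : σ r ≠ 0 := (Finset.mem_filter.mp ((hS ▸ hrS : r ∈ _))).2
          have hzero : ∀ i : ℤ, p < i → i < r → σ i = 0 := by
            intro i h1 h2
            by_contra hne
            have hiS : i ∈ S := hmem i hne
            rcases lt_trichotomy i z with h | h | h
            · have : i ∈ P := by simp only [hP, Finset.mem_filter]; exact ⟨hiS, h⟩
              have := P.le_max' i this
              omega
            · rw [h] at hne; exact hne hz3
            · have : i ∈ R := by simp only [hR, Finset.mem_filter]; exact ⟨hiS, h⟩
              have := R.min'_le i this
              omega
          exact gap_move N σ hpos hsupp p r hpσ hrσ (by omega) hzero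
        · push_neg at hgap
          apply nogap_move N σ hpos hsupp a haI.1 (by omega)
          intro i h1 h2
          have hne : σ i ≠ 0 := by
            rcases (by omega : i = a ∨ (a < i ∧ i < b) ∨ i = b) with h | h | h
            · rw [h]; exact haσ
            · exact hgap i h.1 h.2
            · rw [h]; exact hbσ
          exact lt_of_le_of_ne (hpos i) (Ne.symm hne)
      obtain ⟨σ', h1, h2, h3, h4⟩ := hmove
      have := hmin σ' h1 h2 (by rw [h3, hmass])
      linarith
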